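/- The spectral norm of the n×n circulant matrix C(Q) = circ(Q_0, Q_1, ..., Q_{n-1}) of Perrin numbers equals Q_{n+4} - 2. -/
import Mathlib

/-- The Perrin sequence: Q 0 = 3, Q 1 = 0, Q 2 = 2, Q (n+3) = Q (n+1) + Q n. -/
def perrin : ℕ → ℤ
  | 0 => 3
  | 1 => 0
  | 2 => 2
  | (n + 3) => perrin (n + 1) + perrin n

lemma perrin_nonneg : ∀ n, 0 ≤ perrin n := by
  have key : ∀ n, 0 ≤ perrin n ∧ 0 ≤ perrin (n+1) ∧ 0 ≤ perrin (n+2) := by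
    intro n
    induction n with
    | zero => refine ⟨by norm_num [perrin], by norm_num [perrin], by norm_num [perrin]⟩
    | succ k ih =>
      refine ⟨ih.2.1, ih.2.2, ?_⟩
      show 0 ≤ perrin (k+3)
      rw [perrin]
      exact add_nonneg ih.2.1 ih.1
  exact fun n => (key n).1

lemma sum_perrin (n : ℕ) : ∑ k ∈ Finset.range n, perrin k = perrin (n+4) - 2 := by
  induction n with
  | zero => norm_num [perrin]
  | succ m ih =>
    rw [Finset.sum_range_succ, ih]
    have h5 : perrin (m + 5) = perrin (m + 3) + perrin (m + 2) := by
      show perrin (m + 2 + 3) = _; rw [perrin]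
    have h4 : perrin (m + 4) = perrin (m + 2) + perrin (m + 1) := by
      show perrin (m + 1 + 3) = _; rw [perrin]
    have h3 : perrin (m + 3) = perrin (m + 1) + perrin m := by rw [perrin]
    have : m + 1 + 4 = m + 5 := by ring
    rw [this, h5, h4, h3]; ring

theorem spectral_norm_circulant_perrin (n : ℕ) (hn : 1 ≤ n)
    (M : Matrix (Fin n) (Fin n) ℝ)
    (hM : ∀ i j : Fin n, M i j = (perrin ((j - i : Fin n) : ℕ) : ℝ)) :
    ‖Matrix.toEuclideanCLM (𝕜 := ℝ) M‖ = (perrin (n + 4) : ℝ) - 2 := by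
  haveI : NeZero n := ⟨by omega⟩
  set S : ℝ := ∑ k : Fin n, (perrin (k : ℕ) : ℝ) with hS
  have hMnn : ∀ i j, 0 ≤ M i j := by
    intro i j; rw [hM]; exact_mod_cast perrin_nonneg _
  have hrow : ∀ i : Fin n, ∑ j, M i j = S := by
    intro i
    simp only [hM]
    exact Fintype.sum_equiv (Equiv.subRight i) _ _ (fun j => rfl)
  have hcol : ∀ j : Fin n, ∑ i, M i j = S := by
    intro j
    simp only [hM]
    exact Fintype.sum_equiv (Equiv.subLeft j) _ _ (fun i => rfl)
  have hSnn : 0 ≤ S := Finset.sum_nonneg fun k _ => by exact_mod_cast perrin_nonneg _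
  set T := Matrix.toEuclideanCLM (𝕜 := ℝ) M with hT
  have hTv : ∀ (v : EuclideanSpace ℝ (Fin n)) (i : Fin n), T v i = ∑ j, M i j * v j := by
    intro v i
    rfl
  have hnormsq : ∀ v : EuclideanSpace ℝ (Fin n), ‖v‖ ^ 2 = ∑ i, v i ^ 2 := by
    intro v
    rw [EuclideanSpace.norm_eq, Real.sq_sqrt (Finset.sum_nonneg fun i _ => sq_nonneg _)]
    congr 1; ext i; rw [Real.norm_eq_abs, sq_abs]
  have hSval : S = (perrin (n + 4) : ℝ) - 2 := by
    have he : ∑ k : Fin n, (perrin (k : ℕ) : ℝ) = ∑ k ∈ Finset.range n, (perrin k : ℝ) :=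
      Fin.sum_univ_eq_sum_range (fun k => ((perrin k : ℝ))) n
    rw [hS, he, ← Int.cast_sum, sum_perrin]
    push_cast
    ring
  rw [← hSval]
  apply le_antisymm
  · apply ContinuousLinearMap.opNorm_le_bound _ hSnn
    intro v
    have h1 : ‖T v‖ ^ 2 ≤ (S * ‖v‖) ^ 2 := by
      rw [hnormsq (T v)]
      have key : ∀ i : Fin n, (T v i) ^ 2 ≤ S * ∑ j, M i j * v j ^ 2 := by
        intro i
        rw [hTv v i]
        calc (∑ j, M i j * v j) ^ 2
            ≤ (∑ j, M i j) * ∑ j, M i j * v j ^ 2 := by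
              apply Finset.sum_sq_le_sum_mul_sum_of_sq_eq_mul
              · intro j _; exact hMnn i j
              · intro j _; exact mul_nonneg (hMnn i j) (sq_nonneg _)
              · intro j _; ring
          _ = S * ∑ j, M i j * v j ^ 2 := by rw [hrow i]
      calc ∑ i, (T v i) ^ 2 ≤ ∑ i, S * ∑ j, M i j * v j ^ 2 :=
            Finset.sum_le_sum fun i _ => key i
        _ = S * ∑ j, (∑ i, M i j) * v j ^ 2 := by
            rw [← Finset.mul_sum, Finset.sum_comm]
            congr 1
            refine Finset.sum_congr rfl fun j _ => ?_
            rw [Finset.sum_mul]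
        _ = S * (S * ∑ j, v j ^ 2) := by
            congr 1
            rw [Finset.mul_sum]
            exact Finset.sum_congr rfl fun j _ => by rw [hcol j]
        _ = (S * ‖v‖) ^ 2 := by rw [mul_pow, hnormsq v]; ring
    have h2 : 0 ≤ S * ‖v‖ := mul_nonneg hSnn (norm_nonneg v)
    nlinarith [norm_nonneg (T v)]
  · set w : EuclideanSpace ℝ (Fin n) := (WithLp.equiv 2 (Fin n → ℝ)).symm (fun _ => 1) with hw
    have hwne : w ≠ 0 := by
      intro h
      have : w ⟨0, by omega⟩ = (0 : EuclideanSpace ℝ (Fin n)) ⟨0, by omega⟩ := by rw [h]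
      simp [hw] at this
    have hwpos : 0 < ‖w‖ := norm_pos_iff.mpr hwne
    have hTw : T w = S • w := by
      apply PiLp.ext
      intro i
      rw [hTv w i]
      have : ∀ j, w j = 1 := fun j => rfl
      simp only [this, mul_one, PiLp.smul_apply, smul_eq_mul, mul_one]
      exact hrow i
    have := T.le_opNorm w
    rw [hTw, norm_smul, Real.norm_eq_abs, abs_of_nonneg hSnn] at this
    exact le_of_mul_le_mul_right this hwpos
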